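/- The proper energy density of a relativistic Maxwellian satisfies ρ = 3p + m₀c²n K_1(z)/K_2(z): with z = m₀c²/(k_Bθ) and P⁰ = √(m₀²c²+|P̄|²), c·n·(z/(4π m₀³c³ K_2(z))) ∫_{ℝ³} P⁰ exp(−zP⁰/(m₀c)) dP̄ = 3 n k_B θ + m₀c² n K_1(z)/K_2(z). -/

import Mathlib

/-!
In spherical coordinates the momentum integral is `4π ∫₀^∞ y² P⁰ e^{-z P⁰/(m₀c)} dy`. The
substitution `P⁰ = (m₀c/z) λ`, i.e. `y = (m₀c/z) (λ² - z²)^{1/2}`, turns it into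
`4π (m₀c/z)⁴ ∫_z^∞ e^{-λ} λ² (λ² - z²)^{1/2} dλ`, and splitting
`λ² (λ² - z²)^{1/2} = (λ² - z²)^{3/2} + z² (λ² - z²)^{1/2}` gives `4π (m₀c/z)⁴ (3z² K₂ + z³ K₁)`.
With `k_B θ z = m₀c²` the two terms are `3 n k_B θ` and `m₀c² n K₁/K₂`.
-/

open Real MeasureTheory

/-- `K_1(z) = z⁻¹ ∫_z^∞ e^{-λ}(λ²−z²)^{1/2} dλ`. -/
noncomputable def K1 (z : ℝ) : ℝ :=
  z⁻¹ * ∫ l in Set.Ioi z, Real.exp (-l) * Real.sqrt (l ^ 2 - z ^ 2)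

/-- `K_2(z) = (1/3) z⁻² ∫_z^∞ e^{-λ}(λ²−z²)^{3/2} dλ`. -/
noncomputable def K2 (z : ℝ) : ℝ :=
  (1 / 3) * z ^ (-2 : ℤ) * ∫ l in Set.Ioi z, Real.exp (-l) * (l ^ 2 - z ^ 2) ^ ((3 : ℝ) / 2)

open Set

lemma integral_fun_norm_euclideanSpace_fin_three (F : ℝ → ℝ) :
    ∫ P : EuclideanSpace ℝ (Fin 3), F ‖P‖ = 4 * π * ∫ y in Ioi (0 : ℝ), y ^ 2 * F y := by
  rw [integral_fun_norm_addHaar volume F, finrank_euclideanSpace_fin, measureReal_def,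
    EuclideanSpace.volume_ball_fin_three]
  simp only [ENNReal.ofReal_one, one_pow, one_mul,
    ENNReal.toReal_ofReal (by positivity : 0 ≤ π * 4 / 3), nsmul_eq_mul, smul_eq_mul]
  norm_num
  ring

lemma integral_Ioi_sq_mul_comp_sqrt_sq_add {b : ℝ} (hb : 0 ≤ b) (G : ℝ → ℝ) :
    ∫ t in Ioi (0 : ℝ), t ^ 2 * G √(b ^ 2 + t ^ 2) =
      ∫ l in Ioi b, l * √(l ^ 2 - b ^ 2) * G l := by
  set f : ℝ → ℝ := fun t => √(b ^ 2 + t ^ 2) with hf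
  have hsum_pos : ∀ t ∈ Ioi (0 : ℝ), 0 < b ^ 2 + t ^ 2 := fun t ht => by
    have : 0 < t := ht
    positivity
  have hf_pos : ∀ t ∈ Ioi (0 : ℝ), 0 < f t := fun t ht => Real.sqrt_pos.2 (hsum_pos t ht)
  have hderiv : ∀ t ∈ Ioi (0 : ℝ), HasDerivWithinAt f (t / f t) (Ioi 0) t := by
    intro t ht
    have h := ((hasDerivAt_pow 2 t).const_add (b ^ 2)).sqrt (hsum_pos t ht).ne'
    refine (h.congr_deriv ?_).hasDerivWithinAt
    simp only [hf]
    field_simp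
    norm_num
  have hinj : InjOn f (Ioi 0) := by
    intro x hx y hy hxy
    have : b ^ 2 + x ^ 2 = b ^ 2 + y ^ 2 :=
      (Real.sqrt_inj (by positivity) (by positivity)).1 hxy
    exact (pow_left_inj₀ (le_of_lt hx) (le_of_lt hy) two_ne_zero).1 (by linarith)
  have himage : f '' Ioi 0 = Ioi b := by
    ext l
    constructor
    · rintro ⟨t, ht, rfl⟩
      have ht : 0 < t := ht
      exact Real.lt_sqrt hb |>.2 (by nlinarith)
    · intro hl
      have hl : b < l := hl
      refine ⟨√(l ^ 2 - b ^ 2), Real.sqrt_pos.2 (by nlinarith), ?_⟩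
      change √(b ^ 2 + √(l ^ 2 - b ^ 2) ^ 2) = l
      rw [Real.sq_sqrt (by nlinarith), add_sub_cancel, Real.sqrt_sq (by linarith)]
  rw [← himage, integral_image_eq_integral_abs_deriv_smul measurableSet_Ioi hderiv hinj]
  refine setIntegral_congr_fun measurableSet_Ioi fun t ht => ?_
  have ht : 0 < t := ht
  have hft := hf_pos t ht
  have hsub : f t ^ 2 - b ^ 2 = t ^ 2 := by
    rw [hf, Real.sq_sqrt (by positivity)]; ring
  rw [smul_eq_mul, hsub, Real.sqrt_sq ht.le, abs_of_pos (div_pos ht hft)]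
  field_simp
  rfl

lemma integral_Ioi_sq_mul_sqrt_mul_exp_neg {a z : ℝ} (ha : 0 < a) (hz : 0 < z) :
    ∫ y in Ioi (0 : ℝ), y ^ 2 * (√(a ^ 2 + y ^ 2) * exp (-z * √(a ^ 2 + y ^ 2) / a)) =
      (a / z) ^ 4 * ∫ l in Ioi z, exp (-l) * (l ^ 2 * √(l ^ 2 - z ^ 2)) := by
  have hs : 0 < a / z := div_pos ha hz
  rw [integral_Ioi_sq_mul_comp_sqrt_sq_add ha.le (fun u => u * exp (-z * u / a)),
    ← div_mul_cancel₀ a hz.ne', ← integral_comp_mul_left_Ioi' _ _ hs, smul_eq_mul,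
    div_mul_cancel₀ a hz.ne', ← integral_const_mul, ← integral_const_mul]
  congr 1 with l
  have hsqrt : √((a / z * l) ^ 2 - a ^ 2) = a / z * √(l ^ 2 - z ^ 2) := by
    rw [show (a / z * l) ^ 2 - a ^ 2 = (a / z) ^ 2 * (l ^ 2 - z ^ 2) by field_simp,
      Real.sqrt_mul (by positivity), Real.sqrt_sq hs.le]
  rw [hsqrt, show -z * (a / z * l) / a = -l by field_simp]
  ring

lemma integrableOn_exp_neg_mul_of_abs_le_pow {z : ℝ} (hz : 0 ≤ z) {g : ℝ → ℝ} (k : ℕ)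
    (hg : Continuous g) (hbound : ∀ l ∈ Ioi z, |g l| ≤ l ^ k) :
    IntegrableOn (fun l => exp (-l) * g l) (Ioi z) := by
  have hgamma : IntegrableOn (fun l : ℝ => exp (-l) * l ^ (((k : ℝ) + 1) - 1)) (Ioi z) :=
    (Real.GammaIntegral_convergent (by positivity)).mono_set (Ioi_subset_Ioi hz)
  refine hgamma.mono' ((continuous_exp.comp continuous_neg).mul hg).aestronglyMeasurable ?_
  filter_upwards [ae_restrict_mem measurableSet_Ioi] with l hl
  rw [add_sub_cancel_right, Real.rpow_natCast, norm_mul, Real.norm_eq_abs, Real.norm_eq_abs,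
    abs_of_pos (exp_pos _)]
  exact mul_le_mul_of_nonneg_left (hbound l hl) (exp_pos _).le

lemma rpow_three_halves_eq_mul_sqrt {x : ℝ} (hx : 0 ≤ x) : x ^ ((3 : ℝ) / 2) = x * √x := by
  rw [Real.sqrt_eq_rpow, ← Real.rpow_one_add' hx (by norm_num)]
  norm_num

lemma sqrt_sq_sub_sq_le {l : ℝ} (hl : 0 ≤ l) (z : ℝ) : √(l ^ 2 - z ^ 2) ≤ l :=
  (Real.sqrt_le_sqrt (by nlinarith)).trans_eq (Real.sqrt_sq hl)

lemma integrableOn_exp_neg_mul_sqrt_sq_sub {z : ℝ} (hz : 0 ≤ z) :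
    IntegrableOn (fun l => exp (-l) * √(l ^ 2 - z ^ 2)) (Ioi z) := by
  refine integrableOn_exp_neg_mul_of_abs_le_pow hz 1 (by fun_prop) fun l hl => ?_
  rw [abs_of_nonneg (Real.sqrt_nonneg _), pow_one]
  exact sqrt_sq_sub_sq_le (hz.trans hl.le) z

lemma integrableOn_exp_neg_mul_rpow_sq_sub {z : ℝ} (hz : 0 ≤ z) :
    IntegrableOn (fun l => exp (-l) * (l ^ 2 - z ^ 2) ^ ((3 : ℝ) / 2)) (Ioi z) := by
  refine integrableOn_exp_neg_mul_of_abs_le_pow hz 3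
    ((continuous_pow 2).sub continuous_const |>.rpow_const fun _ => Or.inr (by norm_num))
    fun l hl => ?_
  have hl : z < l := hl
  have hsub : 0 ≤ l ^ 2 - z ^ 2 := by nlinarith
  rw [rpow_three_halves_eq_mul_sqrt hsub, abs_of_nonneg (by positivity),
    show l ^ 3 = l ^ 2 * l by ring]
  exact mul_le_mul (by nlinarith) (sqrt_sq_sub_sq_le (by linarith) z) (Real.sqrt_nonneg _)
    (sq_nonneg l)

lemma integral_exp_neg_mul_sq_mul_sqrt_sq_sub {z : ℝ} (hz : 0 ≤ z) :
    ∫ l in Ioi z, exp (-l) * (l ^ 2 * √(l ^ 2 - z ^ 2)) =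
      (∫ l in Ioi z, exp (-l) * (l ^ 2 - z ^ 2) ^ ((3 : ℝ) / 2)) +
        z ^ 2 * ∫ l in Ioi z, exp (-l) * √(l ^ 2 - z ^ 2) := by
  rw [← integral_const_mul, ← integral_add (integrableOn_exp_neg_mul_rpow_sq_sub hz)
    ((integrableOn_exp_neg_mul_sqrt_sq_sub hz).const_mul _)]
  refine setIntegral_congr_fun measurableSet_Ioi fun l hl => ?_
  have hl : z < l := hl
  rw [rpow_three_halves_eq_mul_sqrt (by nlinarith)]
  ring

lemma integral_exp_neg_mul_sqrt_sq_sub_eq_mul_K1 {z : ℝ} (hz : z ≠ 0) :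
    ∫ l in Ioi z, exp (-l) * √(l ^ 2 - z ^ 2) = z * K1 z := by
  rw [K1, mul_inv_cancel_left₀ hz]

lemma integral_exp_neg_mul_rpow_sq_sub_eq_mul_K2 {z : ℝ} (hz : z ≠ 0) :
    ∫ l in Ioi z, exp (-l) * (l ^ 2 - z ^ 2) ^ ((3 : ℝ) / 2) = 3 * z ^ 2 * K2 z := by
  rw [K2, zpow_neg, zpow_two]
  field_simp

lemma K2_pos {z : ℝ} (hz : 0 < z) : 0 < K2 z := by
  have hpos : ∀ l ∈ Ioi z, 0 < exp (-l) * (l ^ 2 - z ^ 2) ^ ((3 : ℝ) / 2) := fun l hl => by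
    have hl : z < l := hl
    have : 0 < l ^ 2 - z ^ 2 := by nlinarith
    positivity
  have hint : 0 < ∫ l in Ioi z, exp (-l) * (l ^ 2 - z ^ 2) ^ ((3 : ℝ) / 2) := by
    rw [setIntegral_pos_iff_support_of_nonneg_ae
      (ae_restrict_of_forall_mem measurableSet_Ioi fun l hl => (hpos l hl).le)
      (integrableOn_exp_neg_mul_rpow_sq_sub hz.le),
      inter_eq_right.2 fun l hl => Function.mem_support.2 (hpos l hl).ne', Real.volume_Ioi]
    exact ENNReal.zero_lt_top
  rw [← mul_pos_iff_of_pos_left (by positivity : (0 : ℝ) < 3 * z ^ 2),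
    ← integral_exp_neg_mul_rpow_sq_sub_eq_mul_K2 hz.ne']
  exact hint

theorem maxwellian_energy_density_general (m₀ c kB θ n z : ℝ)
    (hm : 0 < m₀) (hc : 0 < c) (hkB : 0 < kB) (hθ : 0 < θ)
    (hz : z = m₀ * c ^ 2 / (kB * θ)) :
    c * n * (z / (4 * π * m₀ ^ 3 * c ^ 3 * K2 z)) *
        (∫ P : EuclideanSpace ℝ (Fin 3),
          Real.sqrt (m₀ ^ 2 * c ^ 2 + ‖P‖ ^ 2) *
            Real.exp (-z * Real.sqrt (m₀ ^ 2 * c ^ 2 + ‖P‖ ^ 2) / (m₀ * c))) =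
      3 * n * kB * θ + m₀ * c ^ 2 * n * (K1 z / K2 z) := by
  have hz0 : 0 < z := hz ▸ by positivity
  have hK2 := (K2_pos hz0).ne'
  have hthermal : kB * θ * z = m₀ * c ^ 2 := by
    rw [hz]
    field_simp
  rw [show m₀ ^ 2 * c ^ 2 = (m₀ * c) ^ 2 by ring,
    integral_fun_norm_euclideanSpace_fin_three fun y =>
      √((m₀ * c) ^ 2 + y ^ 2) * exp (-z * √((m₀ * c) ^ 2 + y ^ 2) / (m₀ * c)),
    integral_Ioi_sq_mul_sqrt_mul_exp_neg (by positivity) hz0,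
    integral_exp_neg_mul_sq_mul_sqrt_sq_sub hz0.le,
    integral_exp_neg_mul_rpow_sq_sub_eq_mul_K2 hz0.ne',
    integral_exp_neg_mul_sqrt_sq_sub_eq_mul_K1 hz0.ne']
  field_simp
  linear_combination (-3 * n * K2 z) * hthermal

/-- The proper energy density of a relativistic Maxwellian:
`ρ = 3p + m₀c² n K_1(z)/K_2(z)` with `p = n k_B θ`. -/
theorem maxwellian_energy_density (m₀ c kB θ n z : ℝ)
    (hm : 0 < m₀) (hc : 0 < c) (hkB : 0 < kB) (hθ : 0 < θ) (hn : 0 < n)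
    (hz : z = m₀ * c ^ 2 / (kB * θ)) :
    c * n * (z / (4 * π * m₀ ^ 3 * c ^ 3 * K2 z)) *
        (∫ P : EuclideanSpace ℝ (Fin 3),
          Real.sqrt (m₀ ^ 2 * c ^ 2 + ‖P‖ ^ 2) *
            Real.exp (-z * Real.sqrt (m₀ ^ 2 * c ^ 2 + ‖P‖ ^ 2) / (m₀ * c))) =
      3 * n * kB * θ + m₀ * c ^ 2 * n * (K1 z / K2 z) :=
  maxwellian_energy_density_general m₀ c kB θ n z hm hc hkB hθ hz
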